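/- For n ≥ 2 players, there is no anonymous backoff acknowledgment-based protocol f that is in equilibrium and for which the expected latency of each player using f (when all players use f) is finite. -/

import Mathlib

/-!
If `q k = 1` for every `k`, all players transmit in every slot and nobody ever succeeds.
Otherwise let `k` be the least index with `q k < 1`. With positive probability all players
transmit in the first `k` slots, after which player `i` is pending and stays quiet with positive
probability. Her expected remaining latency is then the mixture, with weight `q k`, of
transmitting now and staying quiet now; equilibrium makes transmitting now no better, so staying
quiet now is no worse. After a quiet slot she is again pending with `k` failed attempts, so her
expected remaining latency exceeds its own average over the next slot by one, and is infinite.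
-/

open scoped ENNReal

namespace Contention

/-- An acknowledgment-based protocol: maps a player's personal transmission history
(the list of her own past transmission indicators, oldest slot first) to the
probability of transmitting in the next slot. -/
abbrev Protocol : Type := List Bool → ℝ

/-- A protocol is valid if it always prescribes a probability in `[0,1]`. -/
def ValidProtocol (f : Protocol) : Prop := ∀ h : List Bool, 0 ≤ f h ∧ f h ≤ 1

/-- A joint transmission history: the list of transmission vectors, oldest slot first. -/
abbrev Hist (n : ℕ) : Type := List (Fin n → Bool)

/-- The personal transmission history of player `i` extracted from a joint history. -/
def personal {n : ℕ} (h : Hist n) (i : Fin n) : List Bool := h.map fun v => v i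

/-- Player `i` transmits alone (hence successfully) in the slot with transmission vector `v`. -/
def alone {n : ℕ} (v : Fin n → Bool) (i : Fin n) : Prop :=
  v i = true ∧ ∀ j : Fin n, j ≠ i → v j = false

instance {n : ℕ} (v : Fin n → Bool) (i : Fin n) : Decidable (alone v i) := by
  unfold alone; infer_instance

/-- Player `i` is still pending after joint history `h` (she never transmitted alone). -/
def pending {n : ℕ} (h : Hist n) (i : Fin n) : Prop := ∀ v ∈ h, ¬ alone v i

instance {n : ℕ} (h : Hist n) (i : Fin n) : Decidable (pending h i) := by
  unfold pending; infer_instance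

/-- Probability that the next slot has transmission vector `v`, given joint history `h`:
each pending player transmits independently with the probability her protocol assigns to
her personal history, and players that already succeeded stay quiet. -/
noncomputable def stepProb {n : ℕ} (F : Fin n → Protocol) (h : Hist n) (v : Fin n → Bool) : ℝ :=
  ∏ i : Fin n,
    if pending h i then
      (if v i = true then F i (personal h i) else 1 - F i (personal h i))
    else
      (if v i = true then 0 else 1)

/-- Probability that, starting after joint history `h`, the next `e.length` slots produce
exactly the extension `e`. -/
noncomputable def contProb {n : ℕ} (F : Fin n → Protocol) (h e : Hist n) : ℝ :=
  ∏ t ∈ Finset.range e.length, stepProb F (h ++ e.take t) (e.getD t fun _ => false)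

/-- Probability that the first `h.length` slots produce exactly the joint history `h`. -/
noncomputable def histProb {n : ℕ} (F : Fin n → Protocol) (h : Hist n) : ℝ := contProb F [] h

/-- Conditional probability, given joint history `h`, that player `i` is still pending
after `s` further slots. -/
noncomputable def condPendProb {n : ℕ} (F : Fin n → Protocol) (h : Hist n) (i : Fin n)
    (s : ℕ) : ℝ :=
  ∑ e : Fin s → Fin n → Bool,
    if pending (h ++ List.ofFn e) i then contProb F h (List.ofFn e) else 0

/-- Conditional expected latency `E[Tᵢ | h]` of player `i` given joint history `h`
(`Tᵢ` is the first slot in which `i` transmits alone), computed via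
`E[Tᵢ | h] = ∑_{s ≥ 0} Pr(Tᵢ > s | h)`; for `s ≤ h.length` the event `Tᵢ > s` is
determined by `h`, and for larger `s` its probability is `condPendProb`. -/
noncomputable def condLatency {n : ℕ} (F : Fin n → Protocol) (h : Hist n) (i : Fin n) : ℝ≥0∞ :=
  ∑' s : ℕ,
    if s ≤ h.length then (if pending (h.take s) i then 1 else 0)
    else ENNReal.ofReal (condPendProb F h i (s - h.length))

/-- Conditional expected number of further slots until player `i` succeeds, given joint
history `h` (the slot of the successful transmission itself is counted). -/
noncomputable def condRemaining {n : ℕ} (F : Fin n → Protocol) (h : Hist n) (i : Fin n) : ℝ≥0∞ :=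
  ∑' s : ℕ, ENNReal.ofReal (condPendProb F h i s)

/-- A profile of protocols is in equilibrium if after no joint history (arising with
positive probability) can a player strictly decrease her conditional expected latency
by unilaterally switching to another (valid) protocol. -/
def IsEquilibrium {n : ℕ} (F : Fin n → Protocol) : Prop :=
  ∀ i : Fin n, ∀ h : Hist n, 0 < histProb F h →
    ∀ g : Protocol, ValidProtocol g →
      condLatency F h i ≤ condLatency (Function.update F i g) h i

end Contention

namespace Contention

/-- A backoff protocol: the transmission probability depends only on the number `k` of
the player's own unsuccessful transmission attempts so far (for a pending player, every
past transmission was unsuccessful), and equals `q k`. -/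
def backoffProtocol (q : ℕ → ℝ) : Protocol := fun h => q (h.count true)

section Dynamics

variable {n : ℕ} {F : Fin n → Protocol}

lemma personal_length (h : Hist n) (i : Fin n) : (personal h i).length = h.length :=
  List.length_map _

lemma personal_append (h e : Hist n) (i : Fin n) :
    personal (h ++ e) i = personal h i ++ personal e i :=
  List.map_append

lemma pending_append_singleton {h : Hist n} {v : Fin n → Bool} {i : Fin n} :
    pending (h ++ [v]) i ↔ pending h i ∧ ¬ alone v i := by
  simp [pending, or_imp, forall_and]

lemma stepProb_nonneg (hF : ∀ j, ValidProtocol (F j)) (h : Hist n) (v : Fin n → Bool) :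
    0 ≤ stepProb F h v := by
  refine Finset.prod_nonneg fun j _ => ?_
  obtain ⟨h0, h1⟩ := hF j (personal h j)
  split_ifs <;> linarith

lemma sum_stepProb (F : Fin n → Protocol) (h : Hist n) : ∑ v, stepProb F h v = 1 := by
  simp only [stepProb]
  rw [← Fintype.prod_sum fun j (b : Bool) => if pending h j then
      (if b = true then F j (personal h j) else 1 - F j (personal h j))
    else (if b = true then 0 else 1)]
  refine Fintype.prod_eq_one _ fun j => ?_
  split_ifs <;> simp

lemma contProb_nil (F : Fin n → Protocol) (h : Hist n) : contProb F h [] = 1 := by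
  simp [contProb]

lemma contProb_cons (F : Fin n → Protocol) (h : Hist n) (v : Fin n → Bool) (e : Hist n) :
    contProb F h (v :: e) = stepProb F h v * contProb F (h ++ [v]) e := by
  rw [contProb, contProb, List.length_cons, Finset.prod_range_succ', mul_comm]
  congr 1
  · simp
  · refine Finset.prod_congr rfl fun t _ => ?_
    rw [List.take_succ_cons, List.getD_cons_succ, List.append_cons h v (e.take t)]

lemma contProb_append (F : Fin n → Protocol) (h e₁ e₂ : Hist n) :
    contProb F h (e₁ ++ e₂) = contProb F h e₁ * contProb F (h ++ e₁) e₂ := by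
  induction e₁ generalizing h with
  | nil => simp [contProb_nil]
  | cons v e ih =>
    rw [List.cons_append, contProb_cons, contProb_cons, ih, mul_assoc, List.append_cons h v e]

lemma contProb_nonneg (hF : ∀ j, ValidProtocol (F j)) (h e : Hist n) : 0 ≤ contProb F h e :=
  Finset.prod_nonneg fun _ _ => stepProb_nonneg hF _ _

lemma histProb_nonneg (hF : ∀ j, ValidProtocol (F j)) (h : Hist n) : 0 ≤ histProb F h :=
  contProb_nonneg hF [] h

lemma histProb_append_singleton (F : Fin n → Protocol) (h : Hist n) (v : Fin n → Bool) :
    histProb F (h ++ [v]) = histProb F h * stepProb F h v := by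
  rw [histProb, histProb, contProb_append, contProb_cons, contProb_nil, mul_one, List.nil_append]

lemma condPendProb_zero (F : Fin n → Protocol) (h : Hist n) (i : Fin n) :
    condPendProb F h i 0 = if pending h i then 1 else 0 := by
  simp [condPendProb, contProb_nil]

lemma condPendProb_succ (F : Fin n → Protocol) (h : Hist n) (i : Fin n) (s : ℕ) :
    condPendProb F h i (s + 1) = ∑ v, stepProb F h v * condPendProb F (h ++ [v]) i s := by
  rw [condPendProb, ← (Fin.consEquiv fun _ => Fin n → Bool).sum_comp, Fintype.sum_prod_type]
  refine Finset.sum_congr rfl fun v _ => ?_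
  rw [condPendProb, Finset.mul_sum]
  refine Finset.sum_congr rfl fun e _ => ?_
  have hofn : List.ofFn (Fin.consEquiv (fun _ => Fin n → Bool) (v, e)) = v :: List.ofFn e := by
    rw [List.ofFn_succ]
    rfl
  rw [hofn, contProb_cons, List.append_cons, mul_ite, mul_zero]

lemma condPendProb_nonneg (hF : ∀ j, ValidProtocol (F j)) (h : Hist n) (i : Fin n) (s : ℕ) :
    0 ≤ condPendProb F h i s :=
  Finset.sum_nonneg fun _ _ => by
    split_ifs
    exacts [contProb_nonneg hF _ _, le_rfl]

end Dynamics

section Remaining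

variable {n : ℕ} {F : Fin n → Protocol}

lemma condRemaining_eq_add_sum (hF : ∀ j, ValidProtocol (F j)) (h : Hist n) (i : Fin n) :
    condRemaining F h i = (if pending h i then 1 else 0)
      + ∑ v, ENNReal.ofReal (stepProb F h v) * condRemaining F (h ++ [v]) i := by
  have hsucc : ∀ s, ENNReal.ofReal (condPendProb F h i (s + 1))
      = ∑ v, ENNReal.ofReal (stepProb F h v)
          * ENNReal.ofReal (condPendProb F (h ++ [v]) i s) := by
    intro s
    rw [condPendProb_succ, ENNReal.ofReal_sum_of_nonneg fun v _ =>
      mul_nonneg (stepProb_nonneg hF _ _) (condPendProb_nonneg hF _ _ _)]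
    simp only [ENNReal.ofReal_mul (stepProb_nonneg hF _ _)]
  rw [condRemaining, tsum_eq_zero_add' ENNReal.summable, condPendProb_zero]
  simp only [hsucc, condRemaining, ← ENNReal.tsum_mul_left]
  rw [Summable.tsum_finsetSum fun _ _ => ENNReal.summable]
  split_ifs <;> simp

lemma ofReal_stepProb_mul_condRemaining_le (hF : ∀ j, ValidProtocol (F j)) (h : Hist n)
    (v : Fin n → Bool) (i : Fin n) :
    ENNReal.ofReal (stepProb F h v) * condRemaining F (h ++ [v]) i ≤ condRemaining F h i := by
  rw [condRemaining_eq_add_sum hF h i]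
  exact le_add_left (Finset.single_le_sum
    (f := fun w => ENNReal.ofReal (stepProb F h w) * condRemaining F (h ++ [w]) i)
    (fun _ _ => zero_le) (Finset.mem_univ v))

lemma ofReal_histProb_mul_condRemaining_le (hF : ∀ j, ValidProtocol (F j)) (h : Hist n)
    (i : Fin n) :
    ENNReal.ofReal (histProb F h) * condRemaining F h i ≤ condRemaining F [] i := by
  induction h using List.reverseRecOn with
  | nil => simp [histProb, contProb_nil]
  | append_singleton h v ih =>
    calc ENNReal.ofReal (histProb F (h ++ [v])) * condRemaining F (h ++ [v]) i
        = ENNReal.ofReal (histProb F h)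
            * (ENNReal.ofReal (stepProb F h v) * condRemaining F (h ++ [v]) i) := by
          rw [histProb_append_singleton, ENNReal.ofReal_mul (histProb_nonneg hF h), mul_assoc]
      _ ≤ ENNReal.ofReal (histProb F h) * condRemaining F h i :=
          mul_le_mul_right (ofReal_stepProb_mul_condRemaining_le hF h v i) _
      _ ≤ condRemaining F [] i := ih

lemma condRemaining_ne_top_of_histProb_pos (hF : ∀ j, ValidProtocol (F j)) {i : Fin n}
    (hfin : condRemaining F [] i ≠ ⊤) {h : Hist n} (hpos : 0 < histProb F h) :
    condRemaining F h i ≠ ⊤ := by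
  intro htop
  have := ofReal_histProb_mul_condRemaining_le hF h i
  rw [htop, ENNReal.mul_top (ENNReal.ofReal_pos.mpr hpos).ne', top_le_iff] at this
  exact hfin this

lemma condLatency_eq_sum_add_condRemaining (F : Fin n → Protocol) (h : Hist n) (i : Fin n) :
    condLatency F h i = (∑ s ∈ Finset.range h.length, if pending (h.take s) i then 1 else 0)
      + condRemaining F h i := by
  rw [condLatency, ← Summable.sum_add_tsum_nat_add' (k := h.length) ENNReal.summable]
  congr 1
  · exact Finset.sum_congr rfl fun s hs => if_pos (Finset.mem_range.mp hs).le
  · refine tsum_congr fun s => ?_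
    rcases Nat.eq_zero_or_pos s with rfl | hs
    · simp only [condPendProb_zero, Nat.zero_add, le_refl, if_true, List.take_length,
        Nat.sub_self]
      split_ifs <;> simp
    · rw [if_neg (by omega), Nat.add_sub_cancel]

end Remaining

section Deviation

variable {n : ℕ} {F G : Fin n → Protocol}

lemma stepProb_congr {h : Hist n} (hFG : ∀ j, F j (personal h j) = G j (personal h j))
    (v : Fin n → Bool) : stepProb F h v = stepProb G h v :=
  Finset.prod_congr rfl fun j _ => by rw [hFG j]

lemma condPendProb_congr {L : ℕ} (hFG : ∀ j (w : List Bool), L ≤ w.length → F j w = G j w)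
    {h : Hist n} (hL : L ≤ h.length) (i : Fin n) (s : ℕ) :
    condPendProb F h i s = condPendProb G h i s := by
  refine Finset.sum_congr rfl fun e _ => ?_
  congr 1
  refine Finset.prod_congr rfl fun t _ => stepProb_congr (fun j => hFG j _ ?_) _
  rw [personal_length, List.length_append]
  omega

lemma condRemaining_congr {L : ℕ} (hFG : ∀ j (w : List Bool), L ≤ w.length → F j w = G j w)
    {h : Hist n} (hL : L ≤ h.length) (i : Fin n) :
    condRemaining F h i = condRemaining G h i := by
  simp only [condRemaining, condPendProb_congr hFG hL]

def switchAt (f : Protocol) (L : ℕ) (c : ℝ) : Protocol :=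
  fun w => if w.length = L then c else f w

lemma ValidProtocol.switchAt {f : Protocol} (hf : ValidProtocol f) (L : ℕ) {c : ℝ}
    (hc₀ : 0 ≤ c) (hc₁ : c ≤ 1) : ValidProtocol (switchAt f L c) := fun w => by
  unfold Contention.switchAt
  split_ifs
  exacts [⟨hc₀, hc₁⟩, hf w]

/-- Player `i` deviates from `F` only in slot `L + 1`, where she transmits with probability `c`. -/
def deviateAt (F : Fin n → Protocol) (i : Fin n) (L : ℕ) (c : ℝ) : Fin n → Protocol :=
  Function.update F i (switchAt (F i) L c)

lemma deviateAt_valid (hF : ∀ j, ValidProtocol (F j)) (i : Fin n) (L : ℕ) {c : ℝ}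
    (hc₀ : 0 ≤ c) (hc₁ : c ≤ 1) (j : Fin n) : ValidProtocol (deviateAt F i L c j) := by
  revert j
  exact (Function.forall_update_iff F fun _ f => ValidProtocol f).mpr
    ⟨(hF i).switchAt L hc₀ hc₁, fun j _ => hF j⟩

lemma deviateAt_apply_of_lt (F : Fin n → Protocol) (i : Fin n) {L : ℕ} (c : ℝ) (j : Fin n)
    {w : List Bool} (hw : L + 1 ≤ w.length) : deviateAt F i L c j w = F j w := by
  rcases eq_or_ne j i with rfl | hj
  · rw [deviateAt, Function.update_self, switchAt, if_neg (by omega)]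
  · rw [deviateAt, Function.update_of_ne hj]

lemma stepProb_eq_mul_prod_erase (F : Fin n → Protocol) (h : Hist n) (v : Fin n → Bool)
    (i : Fin n) : stepProb F h v =
      (if pending h i then (if v i = true then F i (personal h i) else 1 - F i (personal h i))
        else (if v i = true then 0 else 1)) *
      ∏ j ∈ Finset.univ.erase i,
        if pending h j then (if v j = true then F j (personal h j) else 1 - F j (personal h j))
        else (if v j = true then 0 else 1) :=
  (Finset.mul_prod_erase _ _ (Finset.mem_univ i)).symm

lemma stepProb_deviateAt (F : Fin n → Protocol) (h : Hist n) (v : Fin n → Bool) (i : Fin n)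
    (c : ℝ) : stepProb (deviateAt F i h.length c) h v =
      (if pending h i then (if v i = true then c else 1 - c) else (if v i = true then 0 else 1)) *
      ∏ j ∈ Finset.univ.erase i,
        if pending h j then (if v j = true then F j (personal h j) else 1 - F j (personal h j))
        else (if v j = true then 0 else 1) := by
  rw [stepProb_eq_mul_prod_erase _ h v i]
  congr 1
  · simp [deviateAt, switchAt, personal_length]
  · refine Finset.prod_congr rfl fun j hj => ?_
    rw [deviateAt, Function.update_of_ne (Finset.ne_of_mem_erase hj)]

lemma stepProb_eq_mix (F : Fin n → Protocol) (h : Hist n) (v : Fin n → Bool) (i : Fin n) :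
    stepProb F h v = F i (personal h i) * stepProb (deviateAt F i h.length 1) h v
      + (1 - F i (personal h i)) * stepProb (deviateAt F i h.length 0) h v := by
  rw [stepProb_eq_mul_prod_erase F h v i, stepProb_deviateAt, stepProb_deviateAt]
  split_ifs <;> ring

lemma condPendProb_eq_mix (F : Fin n → Protocol) (h : Hist n) (i : Fin n) (s : ℕ) :
    condPendProb F h i s = F i (personal h i) * condPendProb (deviateAt F i h.length 1) h i s
      + (1 - F i (personal h i)) * condPendProb (deviateAt F i h.length 0) h i s := by
  cases s with
  | zero => simp only [condPendProb_zero]; ring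
  | succ s =>
    have hlen : ∀ v : Fin n → Bool, h.length + 1 ≤ (h ++ [v]).length := by simp
    simp only [condPendProb_succ, condPendProb_congr (deviateAt_apply_of_lt F i _) (hlen _),
      Finset.mul_sum, ← Finset.sum_add_distrib]
    refine Finset.sum_congr rfl fun v _ => ?_
    rw [stepProb_eq_mix F h v i]
    ring

lemma condRemaining_eq_mix (hF : ∀ j, ValidProtocol (F j)) (h : Hist n) (i : Fin n) :
    condRemaining F h i =
      ENNReal.ofReal (F i (personal h i)) * condRemaining (deviateAt F i h.length 1) h i
      + ENNReal.ofReal (1 - F i (personal h i)) * condRemaining (deviateAt F i h.length 0) h i := by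
  obtain ⟨hp₀, hp₁⟩ := hF i (personal h i)
  simp only [condRemaining, ← ENNReal.tsum_mul_left, ← ENNReal.tsum_add]
  refine tsum_congr fun s => ?_
  rw [condPendProb_eq_mix, ENNReal.ofReal_add, ENNReal.ofReal_mul hp₀,
    ENNReal.ofReal_mul (sub_nonneg.mpr hp₁)]
  · exact mul_nonneg hp₀
      (condPendProb_nonneg (deviateAt_valid hF i _ zero_le_one le_rfl) _ _ _)
  · exact mul_nonneg (sub_nonneg.mpr hp₁)
      (condPendProb_nonneg (deviateAt_valid hF i _ le_rfl zero_le_one) _ _ _)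

end Deviation

theorem eq_top_of_one_add_average_le {β ι : Type*} [Fintype ι] (P : β → Prop)
    (R : β → ℝ≥0∞) (next : β → ι → β)
    (hstep : ∀ b, P b → ∃ w : ι → ℝ≥0∞,
      ∑ v, w v = 1 ∧ (∀ v, w v ≠ 0 → P (next b v)) ∧
        1 + ∑ v, w v * R (next b v) ≤ R b)
    {b : β} (hb : P b) : R b = ⊤ := by
  have hge : ∀ m : ℕ, ∀ b, P b → (m : ℝ≥0∞) ≤ R b := by
    intro m
    induction m with
    | zero => simp
    | succ m ih =>
      intro b hb
      obtain ⟨w, hw, hnext, hle⟩ := hstep b hb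
      calc ((m + 1 : ℕ) : ℝ≥0∞) = 1 + ∑ v, w v * m := by
            rw [← Finset.sum_mul, hw, one_mul, Nat.cast_succ, add_comm]
        _ ≤ 1 + ∑ v, w v * R (next b v) := by
            refine add_le_add le_rfl (Finset.sum_le_sum fun v _ => ?_)
            by_cases hv : w v = 0
            · simp [hv]
            · exact mul_le_mul_right (ih _ (hnext v hv)) _
        _ ≤ R b := hle
  by_contra hR
  obtain ⟨m, hm⟩ := ENNReal.exists_nat_gt hR
  exact (hge m b hb).not_gt hm

section Equilibrium

variable {n : ℕ} {F : Fin n → Protocol}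

lemma sum_ofReal_stepProb (hF : ∀ j, ValidProtocol (F j)) (h : Hist n) :
    ∑ v, ENNReal.ofReal (stepProb F h v) = 1 := by
  rw [← ENNReal.ofReal_sum_of_nonneg fun v _ => stepProb_nonneg hF h v, sum_stepProb,
    ENNReal.ofReal_one]

lemma IsEquilibrium.condRemaining_le (hEq : IsEquilibrium F) (i : Fin n) {h : Hist n}
    (hpos : 0 < histProb F h) {g : Protocol} (hg : ValidProtocol g) :
    condRemaining F h i ≤ condRemaining (Function.update F i g) h i := by
  have hle := hEq i h hpos g hg
  rw [condLatency_eq_sum_add_condRemaining, condLatency_eq_sum_add_condRemaining] at hle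
  refine (ENNReal.add_le_add_iff_left (ENNReal.sum_ne_top.mpr fun s _ => ?_)).mp hle
  split_ifs <;> simp

/-- Since transmitting now is no better than following `F`, and `F` mixes transmitting now
with staying quiet now, staying quiet now is no worse than following `F`. -/
lemma IsEquilibrium.condRemaining_deviateAt_zero_le (hF : ∀ j, ValidProtocol (F j))
    (hEq : IsEquilibrium F) (i : Fin n) {h : Hist n} (hpos : 0 < histProb F h)
    (hfin : condRemaining F h i ≠ ⊤) (hlt : F i (personal h i) < 1) :
    condRemaining (deviateAt F i h.length 0) h i ≤ condRemaining F h i := by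
  have hdev : condRemaining F h i ≤ condRemaining (deviateAt F i h.length 1) h i :=
    hEq.condRemaining_le i hpos ((hF i).switchAt h.length zero_le_one le_rfl)
  have hmix := condRemaining_eq_mix hF h i
  have hsum : ENNReal.ofReal (F i (personal h i)) + ENNReal.ofReal (1 - F i (personal h i))
      = 1 := by
    rw [← ENNReal.ofReal_add (hF i _).1 (sub_nonneg.mpr (hF i _).2), add_sub_cancel,
      ENNReal.ofReal_one]
  have hp : ENNReal.ofReal (F i (personal h i)) ≠ ⊤ := ENNReal.ofReal_ne_top
  have hq : ENNReal.ofReal (1 - F i (personal h i)) ≠ ⊤ := ENNReal.ofReal_ne_top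
  have hq₀ : ENNReal.ofReal (1 - F i (personal h i)) ≠ 0 :=
    (ENNReal.ofReal_pos.mpr (sub_pos.mpr hlt)).ne'
  generalize ENNReal.ofReal (F i (personal h i)) = p at *
  generalize ENNReal.ofReal (1 - F i (personal h i)) = q at *
  generalize condRemaining F h i = R at *
  generalize condRemaining (deviateAt F i h.length 0) h i = R₀ at *
  generalize condRemaining (deviateAt F i h.length 1) h i = R₁ at *
  have hle : p * R + q * R₀ ≤ p * R + q * R :=
    calc p * R + q * R₀ ≤ p * R₁ + q * R₀ := by gcongr
      _ = p * R + q * R := by rw [← hmix, ← add_mul, hsum, one_mul]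
  exact (ENNReal.mul_le_mul_iff_right hq₀ hq).mp
    ((ENNReal.add_le_add_iff_left (ENNReal.mul_ne_top hp hfin)).mp hle)

def MayStayQuiet (F : Fin n → Protocol) (i : Fin n) (h : Hist n) : Prop :=
  0 < histProb F h ∧ pending h i ∧ F i (personal h i) < 1

lemma MayStayQuiet.append (hF : ∀ j, ValidProtocol (F j)) {i : Fin n}
    (hsilent : ∀ w, F i (w ++ [false]) = F i w) {h : Hist n} (hh : MayStayQuiet F i h)
    {v : Fin n → Bool} (hv : stepProb (deviateAt F i h.length 0) h v ≠ 0) :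
    MayStayQuiet F i (h ++ [v]) := by
  obtain ⟨hpos, hpend, hlt⟩ := hh
  have hF₀ := deviateAt_valid hF i h.length le_rfl zero_le_one
  have hstep₀ : 0 < stepProb (deviateAt F i h.length 0) h v :=
    (stepProb_nonneg hF₀ h v).lt_of_ne' hv
  have hquiet : v i = false := by
    by_contra hvi
    rw [stepProb_deviateAt, if_pos hpend, if_pos (Bool.not_eq_false _ ▸ hvi), zero_mul]
      at hstep₀
    exact hstep₀.false
  have hstep : 0 < stepProb F h v := by
    rw [stepProb_eq_mix F h v i]
    exact add_pos_of_nonneg_of_pos (mul_nonneg (hF i _).1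
      (stepProb_nonneg (deviateAt_valid hF i h.length zero_le_one le_rfl) h v))
      (mul_pos (sub_pos.mpr hlt) hstep₀)
  refine ⟨by rw [histProb_append_singleton]; exact mul_pos hpos hstep,
    pending_append_singleton.mpr ⟨hpend, fun hal => by simpa [hquiet] using hal.1⟩, ?_⟩
  rwa [personal_append, show personal [v] i = [false] from by simp [personal, hquiet],
    hsilent]

/-- Staying quiet is never worse, and after a quiet slot the player faces the same situation
again, so she may as well wait forever. -/
theorem IsEquilibrium.condRemaining_nil_eq_top (hF : ∀ j, ValidProtocol (F j))
    (hEq : IsEquilibrium F) {i : Fin n} (hsilent : ∀ w, F i (w ++ [false]) = F i w)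
    {h : Hist n} (hh : MayStayQuiet F i h) : condRemaining F [] i = ⊤ := by
  by_contra hR
  refine condRemaining_ne_top_of_histProb_pos hF hR hh.1 <|
    eq_top_of_one_add_average_le (MayStayQuiet F i) (fun h => condRemaining F h i)
      (fun h v => h ++ [v]) (fun h hh => ?_) hh
  have hF₀ := deviateAt_valid hF i h.length le_rfl zero_le_one
  refine ⟨fun v => ENNReal.ofReal (stepProb (deviateAt F i h.length 0) h v),
    sum_ofReal_stepProb hF₀ h,
    fun v hv => hh.append hF hsilent fun h0 => hv (ENNReal.ofReal_eq_zero.mpr h0.le), ?_⟩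
  calc 1 + ∑ v, ENNReal.ofReal (stepProb (deviateAt F i h.length 0) h v)
        * condRemaining F (h ++ [v]) i
      = condRemaining (deviateAt F i h.length 0) h i := by
        rw [condRemaining_eq_add_sum hF₀, if_pos hh.2.1]
        refine congrArg (1 + ·) (Finset.sum_congr rfl fun v _ => ?_)
        rw [condRemaining_congr (L := h.length + 1) (deviateAt_apply_of_lt F i 0) (by simp)]
    _ ≤ condRemaining F h i :=
        hEq.condRemaining_deviateAt_zero_le hF i hh.1
          (condRemaining_ne_top_of_histProb_pos hF hR hh.1) hh.2.2

end Equilibrium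

section Backoff

variable {n : ℕ}

lemma backoffProtocol_append_false (q : ℕ → ℝ) (w : List Bool) :
    backoffProtocol q (w ++ [false]) = backoffProtocol q w := by
  simp [backoffProtocol]

lemma not_alone_true (hn : 2 ≤ n) (j : Fin n) : ¬ alone (fun _ : Fin n => true) j := by
  have : Nontrivial (Fin n) := Fin.nontrivial_iff_two_le.mpr hn
  obtain ⟨k, hk⟩ := exists_ne j
  exact fun hal => Bool.true_eq_false_eq_False (hal.2 k hk)

lemma pending_replicate_true (hn : 2 ≤ n) (m : ℕ) (j : Fin n) :
    pending (List.replicate m fun _ : Fin n => true) j := fun _ hv =>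
  List.eq_of_mem_replicate hv ▸ not_alone_true hn j

lemma count_personal_replicate_true (m : ℕ) (j : Fin n) :
    (personal (List.replicate m fun _ : Fin n => true) j).count true = m := by
  simp [personal, List.map_replicate]

lemma stepProb_backoff_replicate_true (hn : 2 ≤ n) (q : ℕ → ℝ) (m : ℕ)
    (v : Fin n → Bool) :
    stepProb (fun _ => backoffProtocol q) (List.replicate m fun _ => true) v =
      ∏ j, if v j = true then q m else 1 - q m := by
  refine Finset.prod_congr rfl fun j _ => ?_
  simp only [if_pos (pending_replicate_true hn m j), backoffProtocol,
    count_personal_replicate_true]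

lemma histProb_backoff_replicate_true (hn : 2 ≤ n) {q : ℕ → ℝ} {m : ℕ}
    (hq : ∀ t < m, q t = 1) :
    histProb (fun _ : Fin n => backoffProtocol q) (List.replicate m fun _ => true) = 1 := by
  induction m with
  | zero => exact contProb_nil _ _
  | succ m ih =>
    rw [List.replicate_succ', histProb_append_singleton, ih fun t ht => hq t (by omega),
      stepProb_backoff_replicate_true hn, hq m m.lt_succ_self]
    simp

lemma condRemaining_backoff_nil_eq_top (hn : 2 ≤ n) {q : ℕ → ℝ} (hq : ∀ k, q k = 1)
    (i : Fin n) : condRemaining (fun _ => backoffProtocol q) [] i = ⊤ := by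
  have hF : ∀ j : Fin n, ValidProtocol (backoffProtocol q) := fun _ w => by
    simp [backoffProtocol, hq]
  refine eq_top_of_one_add_average_le (fun h => ∃ m, h = List.replicate m fun _ => true)
    (fun h => condRemaining (fun _ => backoffProtocol q) h i) (fun h v => h ++ [v]) ?_ ⟨0, rfl⟩
  rintro _ ⟨m, rfl⟩
  refine ⟨_, sum_ofReal_stepProb hF (List.replicate m fun _ => true),
    fun v hv => ⟨m + 1, ?_⟩, ?_⟩
  · have hall : ∀ j, v j = true := by
      by_contra! ⟨j, hj⟩
      refine hv (ENNReal.ofReal_eq_zero.mpr (le_of_eq ?_))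
      rw [stepProb_backoff_replicate_true hn, hq]
      exact Finset.prod_eq_zero (Finset.mem_univ j) (by simp [hj])
    rw [List.replicate_succ', show v = fun _ => true from funext hall]
  · rw [condRemaining_eq_add_sum hF, if_pos (pending_replicate_true hn m i)]

end Backoff

/-- For `n ≥ 2` players, there is no anonymous backoff
acknowledgment-based protocol that is in equilibrium and gives every player finite
expected latency. -/
theorem no_backoff_equilibrium_with_finite_latency :
    ∀ (n : ℕ) (q : ℕ → ℝ), 2 ≤ n →
      (∀ k : ℕ, 0 ≤ q k ∧ q k ≤ 1) →
      (∀ i : Fin n, condLatency (fun _ : Fin n => backoffProtocol q) [] i < ⊤) →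
      ¬ IsEquilibrium (fun _ : Fin n => backoffProtocol q) := by
  intro n q hn hq hfin hEq
  have hF : ∀ j : Fin n, ValidProtocol (backoffProtocol q) := fun _ w => hq (w.count true)
  let i : Fin n := ⟨0, by omega⟩
  have hR : condRemaining (fun _ => backoffProtocol q) [] i ≠ ⊤ := by
    simpa [condLatency_eq_sum_add_condRemaining] using (hfin i).ne
  by_cases hq₁ : ∀ k, q k = 1
  · exact hR (condRemaining_backoff_nil_eq_top hn hq₁ i)
  have hex : ∃ k, q k < 1 := by
    push Not at hq₁
    obtain ⟨k, hk⟩ := hq₁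
    exact ⟨k, (hq k).2.lt_of_ne hk⟩
  have hbefore : ∀ t < Nat.find hex, q t = 1 := fun t ht =>
    le_antisymm (hq t).2 (not_lt.mp (Nat.find_min hex ht))
  refine hR (hEq.condRemaining_nil_eq_top hF (backoffProtocol_append_false q)
    (h := List.replicate (Nat.find hex) fun _ => true) ⟨?_, pending_replicate_true hn _ i, ?_⟩)
  · rw [histProb_backoff_replicate_true hn hbefore]
    exact one_pos
  · simpa only [backoffProtocol, count_personal_replicate_true] using Nat.find_spec hex

end Contention
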